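/- In the setting of the previous statement (S• the shifted cone of 1−φ on a graded-commutative DGA with multiplicative φ commuting with d, with the product ⟨(x,y),(x',y')⟩ = (xx', (−1)^j x y' + y φ(x'))): if s = (x₁, x₂) ∈ S^r is a cocycle (i.e., dx₁ = 0 and (1−φ)(x₁) = dx₂) and t ∈ S^{j} is a coboundary (t = d_S(z₁, z₂) for some (z₁, z₂) ∈ S^{j−1}), then the product ⟨s, t⟩ ∈ S^{r+j} is a coboundary. Consequently the product of a cocycle with a coboundary vanishes in cohomology. -/

import Mathlib

/-- The sign `(-1)^i` for `i : ℤ`. -/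
def sgn (i : ℤ) : ℤ := ((Int.negOnePow i : ℤˣ) : ℤ)

/-- Transport along an equality of degrees. -/
def gcast {R : Type*} [Semiring R] {A : ℤ → Type*} [∀ i, AddCommGroup (A i)]
    [∀ i, Module R (A i)] {i j : ℤ} (h : i = j) : A i →ₗ[R] A j :=
  h ▸ (LinearMap.id : A i →ₗ[R] A i)

/-!
If `s = (x₁, x₂)` is a cocycle of the cone, then `z ↦ ⟨s, z⟩` commutes with `d_S` up to the
sign `(-1)^r`: in the first component because `d x₁ = 0`, in the second because the term
`d x₂ · φ z₁ = (1 - φ)(x₁) · φ z₁` coming from the Leibniz rule is exactly what turns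
`(1 - φ)(x₁ z₁)` into `x₁ · (1 - φ)(z₁)` (here `φ` is multiplicative). Hence
`⟨s, d_S z⟩ = d_S w` with `w = (-1)^r ⟨s, z⟩ = ((-1)^r x₁ z₁, x₁ z₂ + (-1)^r x₂ φ(z₁))`.
-/

theorem sgn_mul_self (i : ℤ) : sgn i * sgn i = 1 := by
  rw [sgn, ← Units.val_mul, Int.units_mul_self, Units.val_one]

theorem sgn_sub_one (i : ℤ) : sgn (i - 1) = -sgn i := by
  rw [sgn, sgn, Int.negOnePow_sub, Int.negOnePow_one, mul_neg_one, Units.val_neg]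

theorem sgn_smul_sgn_smul {M : Type*} [AddCommGroup M] (i : ℤ) (a : M) :
    sgn i • sgn i • a = a := by
  rw [smul_smul, sgn_mul_self, one_smul]

section gcast

variable {R : Type*} [CommSemiring R] {A : ℤ → Type*} [∀ i, AddCommGroup (A i)]
  [∀ i, Module R (A i)]

theorem apply_gcast (φ : ∀ i : ℤ, A i →ₗ[R] A i) {i i' : ℤ} (h : i = i') (a : A i) :
    φ i' (gcast (R := R) h a) = gcast (R := R) h (φ i a) := by
  subst h; rfl

theorem gcast_mul (mul : ∀ i j k : ℤ, i + j = k → (A i →ₗ[R] (A j →ₗ[R] A k)))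
    {i j k k' : ℤ} (hk : k = k') (h : i + j = k) (a : A i) (b : A j) :
    gcast (R := R) hk (mul i j k h a b) = mul i j k' (hk ▸ h) a b := by
  subst hk; rfl

theorem mul_gcast_left (mul : ∀ i j k : ℤ, i + j = k → (A i →ₗ[R] (A j →ₗ[R] A k)))
    {i i' j k : ℤ} (hi : i = i') (h : i' + j = k) (a : A i) (b : A j) :
    mul i' j k h (gcast (R := R) hi a) b = mul i j k (hi ▸ h) a b := by
  subst hi; rfl

theorem mul_gcast_right (mul : ∀ i j k : ℤ, i + j = k → (A i →ₗ[R] (A j →ₗ[R] A k)))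
    {i j j' k : ℤ} (hj : j = j') (h : i + j' = k) (a : A i) (b : A j) :
    mul i j' k h a (gcast (R := R) hj b) = mul i j k (hj ▸ h) a b := by
  subst hj; rfl

end gcast

section Leibniz

variable {R : Type*} [CommSemiring R] {A : ℤ → Type*} [∀ i, AddCommGroup (A i)]
  [∀ i, Module R (A i)] {mul : ∀ i j k : ℤ, i + j = k → (A i →ₗ[R] (A j →ₗ[R] A k))}
  {d : ∀ i : ℤ, A i →ₗ[R] A (i + 1)}

variable (mul d) in
def LeibnizRule : Prop :=
  ∀ (i j k : ℤ) (h : i + j = k) (h₁ : i + 1 + j = k + 1) (h₂ : i + (j + 1) = k + 1)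
    (a : A i) (b : A j),
    d k (mul i j k h a b) =
      mul (i + 1) j (k + 1) h₁ (d i a) b + sgn i • mul i (j + 1) (k + 1) h₂ a (d j b)

theorem d_mul_of_d_eq_zero
    (hleib : LeibnizRule mul d) {i j k : ℤ} (h : i + j = k) (h' : i + (j + 1) = k + 1) {a : A i} (ha : d i a = 0) (b : A j) :
    d k (mul i j k h a b) = sgn i • mul i (j + 1) (k + 1) h' a (d j b) := by
  rw [hleib i j k h (by omega) h', ha, map_zero, LinearMap.zero_apply, zero_add]

theorem d_mul_apply_of_sub_eq_d
    (hleib : LeibnizRule mul d)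
    {φ : ∀ i : ℤ, A i →ₗ[R] A i} (hφd : ∀ (i : ℤ) (a : A i), d i (φ i a) = φ (i + 1) (d i a))
    {p r j k : ℤ} (hp : p + 1 = r) (h : p + j = k) (h₁ : r + j = k + 1)
    (h₂ : p + (j + 1) = k + 1)
    {x : A r} {y : A p} (hxy : x - φ r x = gcast (R := R) hp (d p y)) (b : A j) :
    d k (mul p j k h y (φ j b)) =
      mul r j (k + 1) h₁ (x - φ r x) (φ j b) +
        sgn p • mul p (j + 1) (k + 1) h₂ y (φ (j + 1) (d j b)) := by
  rw [hleib p j k h (by omega) h₂, hφd, hxy, mul_gcast_left]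

end Leibniz

/-- On the shifted cone `S•` of `1-φ` on a graded-commutative DGA `A•` (with `φ`
multiplicative and commuting with `d`), with product
`⟨(x,y),(x',y')⟩ = (xx', (-1)^r x y' + y φ(x'))`: the product of a cocycle
`s = (x₁,x₂) ∈ S^r` with a coboundary `t = d_S(z₁,z₂) ∈ S^j` is a coboundary in
`S^{r+j}`; hence the product of a cocycle with a coboundary vanishes in cohomology. -/
theorem syntomic_cone_cocycle_mul_coboundary
    {R : Type*} [CommRing R] (A : ℤ → Type*)
    [∀ i, AddCommGroup (A i)] [∀ i, Module R (A i)]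
    (mul : ∀ i j k : ℤ, i + j = k → (A i →ₗ[R] (A j →ₗ[R] A k)))
    (d : ∀ i : ℤ, A i →ₗ[R] A (i + 1))
    (hleib : ∀ (i j k : ℤ) (h : i + j = k) (a : A i) (b : A j),
      d k (mul i j k h a b) =
        mul (i + 1) j (k + 1) (by omega) (d i a) b +
          sgn i • mul i (j + 1) (k + 1) (by omega) a (d j b))
    (φ : ∀ i : ℤ, A i →ₗ[R] A i)
    (hφmul : ∀ (i j k : ℤ) (h : i + j = k) (a : A i) (b : A j),
      φ k (mul i j k h a b) = mul i j k h (φ i a) (φ j b))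
    (hφd : ∀ (i : ℤ) (a : A i), d i (φ i a) = φ (i + 1) (d i a))
    -- a cocycle `s = (x₁, x₂) ∈ S^r`:  `d x₁ = 0` and `(1-φ)(x₁) = d x₂`
    (r : ℤ) (x₁ : A r) (x₂ : A (r - 1))
    (hs₁ : d r x₁ = 0)
    (hs₂ : x₁ - φ r x₁ = gcast (R := R) (A := A) (by omega) (d (r - 1) x₂))
    -- a coboundary `t = d_S(z₁, z₂) ∈ S^j` with `(z₁, z₂) ∈ S^{j-1}`
    (j : ℤ) (z₁ : A (j - 1)) (z₂ : A (j - 2)) :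
    -- the first and second components of `t = d_S(z₁,z₂)`
    let t₁ : A j := gcast (R := R) (A := A) (by omega) (d (j - 1) z₁)
    let t₂ : A (j - 1) :=
      z₁ - φ (j - 1) z₁ - gcast (R := R) (A := A) (by omega) (d (j - 2) z₂)
    -- the components of the product `⟨s, t⟩ ∈ S^{r+j}`
    let st₁ : A (r + j) := mul r j (r + j) rfl x₁ t₁
    let st₂ : A (r + j - 1) :=
      sgn r • mul r (j - 1) (r + j - 1) (by omega) x₁ t₂ +
        mul (r - 1) j (r + j - 1) (by omega) x₂ (φ j t₁)
    -- `⟨s,t⟩` is a coboundary: `⟨s,t⟩ = d_S(w₁,w₂)` for some `(w₁,w₂) ∈ S^{r+j-1}`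
    ∃ (w₁ : A (r + j - 1)) (w₂ : A (r + j - 2)),
      st₁ = gcast (R := R) (A := A) (by omega) (d (r + j - 1) w₁) ∧
      st₂ = w₁ - φ (r + j - 1) w₁ -
        gcast (R := R) (A := A) (by omega) (d (r + j - 2) w₂) := by
  intro t₁ t₂ st₁ st₂
  have hleib' : LeibnizRule mul d := fun i j k h _ _ ↦ hleib i j k h
  have hA : r + (j - 1) = r + j - 1 := by omega
  refine ⟨sgn r • mul r (j - 1) (r + j - 1) hA x₁ z₁,
    mul r (j - 2) (r + j - 2) (by omega) x₁ z₂ +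
      sgn r • mul (r - 1) (j - 1) (r + j - 2) (by omega) x₂ (φ (j - 1) z₁), ?_, ?_⟩
  · simp only [st₁, t₁]
    rw [mul_gcast_right, map_zsmul, d_mul_of_d_eq_zero hleib' hA (by omega) hs₁,
      sgn_smul_sgn_smul, gcast_mul]
  · have hd₁ :=
      d_mul_of_d_eq_zero hleib' (show r + (j - 2) = r + j - 2 by omega) (by omega) hs₁ z₂
    have hd₂ := d_mul_apply_of_sub_eq_d hleib' hφd (by omega)
      (show r - 1 + (j - 1) = r + j - 2 by omega) (by omega) (by omega) hs₂ z₁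
    simp only [t₂, st₂, t₁, map_add, map_sub, map_neg, map_zsmul, LinearMap.sub_apply, hd₁, hd₂,
      hφmul, gcast_mul, mul_gcast_right, apply_gcast, sgn_sub_one, neg_smul, smul_neg, smul_add,
      smul_sub, sgn_smul_sgn_smul]
    abel
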